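/- For any well-founded strictly partially ordered label set (S, <), the Star Hydra rewrite relation →_SH is strongly normalizing: there is no infinite sequence t0 →_SH t1 →_SH t2 →_SH ⋯ of Star Hydras. -/

import Mathlib

namespace StarGames

/-- Unranked terms over signature `σ` and variables `X`. -/
inductive Term (σ : Type) (X : Type) : Type
  | var : X → Term σ X
  | app : σ → List (Term σ X) → Term σ X

variable {σ σ' X : Type}

/-- Relabeling of symbols. -/
def Term.relabel (h : σ → σ') : Term σ X → Term σ' X
  | .var x => .var x
  | .app f ts => .app (h f) (ts.attach.map fun ⟨t, _⟩ => t.relabel h)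
decreasing_by
  have := List.sizeOf_lt_of_mem ‹_ ∈ ts›
  simp only [Term.app.sizeOf_spec]
  omega

/-- Closure of a root-step relation under contexts (rewriting inside one argument). -/
inductive Rewrite (R : Term σ X → Term σ X → Prop) : Term σ X → Term σ X → Prop
  | root {s t : Term σ X} : R s t → Rewrite R s t
  | congr {s t : Term σ X} (f : σ) (pre post : List (Term σ X)) :
      Rewrite R s t →
      Rewrite R (Term.app f (pre ++ s :: post)) (Term.app f (pre ++ t :: post))

/-- Root steps of the swap TRS:  f(u⃗,x,y,w⃗) → f(u⃗,y,x,w⃗). -/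
inductive SwapRoot : Term σ X → Term σ X → Prop
  | swap (f : σ) (us : List (Term σ X)) (x y : Term σ X) (ws : List (Term σ X)) :
      SwapRoot (Term.app f (us ++ x :: y :: ws)) (Term.app f (us ++ y :: x :: ws))

/-- One swap step, anywhere in a term. -/
def SwapStep : Term σ X → Term σ X → Prop := Rewrite (SwapRoot (σ := σ) (X := X))

/-- `≃` : the equivalence relation generated by swap steps. -/
def TermEquiv : Term σ X → Term σ X → Prop := Relation.EqvGen SwapStep

def treeSetoid (σ X : Type) : Setoid (Term σ X) :=
  ⟨TermEquiv, Relation.EqvGen.is_equivalence _⟩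

/-- (Unordered) trees: terms modulo permutation of arguments. -/
def Tree (σ X : Type) := Quotient (treeSetoid σ X)

def Tree.mk (t : Term σ X) : Tree σ X := Quotient.mk (treeSetoid σ X) t

/-- Rewrite relation induced on trees by a root-step relation. -/
def TreeRel (R : Term σ X → Term σ X → Prop) : Tree σ X → Tree σ X → Prop :=
  fun a b => ∃ s t : Term σ X, a = Tree.mk s ∧ b = Tree.mk t ∧ Rewrite R s t

/-- Terms all of whose symbols satisfy `p`. -/
inductive Uses (p : σ → Prop) : Term σ X → Prop
  | var (x : X) : Uses p (Term.var x)
  | app (f : σ) (ts : List (Term σ X)) :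
      p f → (∀ t ∈ ts, Uses p t) → Uses p (Term.app f ts)

end StarGames

namespace StarGames

variable {S : Type}

/-- The Star Hydra signature: `(a, false)` is the plain symbol `a ∈ S`, and
`(a, true)` is the underlined symbol `a̲`. -/
abbrev SHSig (S : Type) : Type := S × Bool

/-- Root steps of the Star Hydra rule (chop):
`n(α, x⃗) → n̲(β̲₁, …, β̲ₖ, x⃗)` for `k ≥ 0` and `β₁, …, βₖ < α`, where `α`
labels a leaf. -/
inductive ChopRoot (lt : S → S → Prop) : Term (SHSig S) Empty → Term (SHSig S) Empty → Prop
  | chop (n α : S) (βs : List S) (xs : List (Term (SHSig S) Empty)) :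
      (∀ β ∈ βs, lt β α) →
      ChopRoot lt
        (.app (n, false) (Term.app (α, false) [] :: xs))
        (.app (n, true)
          ((βs.map fun β => Term.app (β, true) ([] : List (Term (SHSig S) Empty))) ++ xs))

/-- Root steps of (propagate): `n(m̲(x⃗), y⃗) → n̲(m̲(x⃗), y⃗)`. -/
inductive PropagateRoot : Term (SHSig S) Empty → Term (SHSig S) Empty → Prop
  | propagate (n m : S) (xs ys : List (Term (SHSig S) Empty)) :
      PropagateRoot
        (.app (n, false) (Term.app (m, true) xs :: ys))
        (.app (n, true) (Term.app (m, true) xs :: ys))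

/-- Root steps of (widen): `n̲(m̲(x⃗), y⃗) → n̲(m̲(x⃗), …, m̲(x⃗), y⃗)`. -/
inductive WidenRoot : Term (SHSig S) Empty → Term (SHSig S) Empty → Prop
  | widen (n m : S) (k : ℕ) (xs ys : List (Term (SHSig S) Empty)) :
      WidenRoot
        (.app (n, true) (Term.app (m, true) xs :: ys))
        (.app (n, true) (List.replicate k (Term.app (m, true) xs) ++ ys))

/-- Root steps of (lengthen): `n̲(x⃗) → m̲(n̲(x⃗))` provided `m < n`. -/
inductive LengthenRoot (lt : S → S → Prop) : Term (SHSig S) Empty → Term (SHSig S) Empty → Prop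
  | lengthen (n m : S) (xs : List (Term (SHSig S) Empty)) :
      lt m n →
      LengthenRoot lt (.app (n, true) xs) (.app (m, true) [Term.app (n, true) xs])

/-- Root steps of (waive): `m̲(x⃗) → m(x⃗)`. -/
inductive WaiveRoot : Term (SHSig S) Empty → Term (SHSig S) Empty → Prop
  | waive (m : S) (xs : List (Term (SHSig S) Empty)) :
      WaiveRoot (.app (m, true) xs) (.app (m, false) xs)

/-- `R^!`: a maximal `R`-reduction, i.e. `x R* y` with `y` an `R`-normal form. -/
def MaxRed {α : Type*} (R : α → α → Prop) (a b : α) : Prop :=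
  Relation.ReflTransGen R a b ∧ ∀ c : α, ¬ R b c

/-- The Star Hydra rewrite relation
`→_SH = →_chop · →_propagate^! · (→_widen ∪ →_lengthen)* · →_waive^!` on trees. -/
def SHRel (lt : S → S → Prop) : Tree (SHSig S) Empty → Tree (SHSig S) Empty → Prop :=
  fun a b =>
    ∃ c d e : Tree (SHSig S) Empty,
      TreeRel (ChopRoot lt) a c ∧
      MaxRed (TreeRel PropagateRoot) c d ∧
      Relation.ReflTransGen
        (fun x y => TreeRel WidenRoot x y ∨ TreeRel (LengthenRoot lt) x y) d e ∧
      MaxRed (TreeRel WaiveRoot) e b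

/-- A Star Hydra: a finite (unordered) tree with nodes labeled from `S`
(no underlined symbols). -/
def IsStarHydra (T : Tree (SHSig S) Empty) : Prop :=
  ∃ t : Term (SHSig S) Empty,
    T = Tree.mk t ∧ Uses (fun a : SHSig S => a.2 = false) t

/-! ### Auxiliary infrastructure for the proof -/

section Infra

variable {σ σ' X : Type}

/-- A convenient induction principle for `Term`. -/
theorem Term.indOn {P : Term σ X → Prop} (t : Term σ X)
    (hv : ∀ x, P (.var x))
    (ha : ∀ f ts, (∀ s ∈ ts, P s) → P (.app f ts)) : P t :=
  match t with
  | .var x => hv x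
  | .app f ts => ha f ts (fun s _ => Term.indOn s hv ha)
decreasing_by
  have := List.sizeOf_lt_of_mem ‹_ ∈ ts›
  simp only [Term.app.sizeOf_spec]
  omega

theorem Term.relabel_app (h : σ → σ') (f : σ) (ts : List (Term σ X)) :
    Term.relabel h (.app f ts) = .app (h f) (ts.map (Term.relabel h)) := by
  rw [Term.relabel]
  congr 1
  exact List.attach_map_val (l := ts) (f := Term.relabel h)

theorem Term.relabel_comp {σ''} (h : σ → σ') (h' : σ' → σ'') (t : Term σ X) :
    Term.relabel h' (Term.relabel h t) = Term.relabel (h' ∘ h) t := by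
  induction t using Term.indOn with
  | hv x => simp [Term.relabel]
  | ha f ts IH =>
    rw [Term.relabel_app, Term.relabel_app, Term.relabel_app, List.map_map]
    congr 1
    exact List.map_congr_left IH

theorem Term.relabel_id_of_uses {p : σ → Prop} {h : σ → σ}
    (hh : ∀ a, p a → h a = a) (t : Term σ X) (ht : Uses p t) :
    Term.relabel h t = t := by
  induction t using Term.indOn with
  | hv x => simp [Term.relabel]
  | ha f ts IH =>
    rcases ht with _ | ⟨f, ts, hf, hts⟩
    rw [Term.relabel_app, hh f hf]
    congr 1
    conv_rhs => rw [← List.map_id ts]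
    rw [List.map_eq_map_iff]
    intro t ht
    exact IH t ht (hts t ht)

/-- Equivalence is a congruence in one argument. -/
theorem TermEquiv.congr {s t : Term σ X} (f : σ) (pre post : List (Term σ X))
    (h : TermEquiv s t) :
    TermEquiv (Term.app f (pre ++ s :: post)) (Term.app f (pre ++ t :: post)) := by
  induction h with
  | rel a b hab => exact Relation.EqvGen.rel _ _ (Rewrite.congr f pre post hab)
  | refl a => exact Relation.EqvGen.refl _
  | symm a b _ IH => exact Relation.EqvGen.symm _ _ IH
  | trans a b c _ _ IH1 IH2 => exact Relation.EqvGen.trans _ _ _ IH1 IH2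

/-- Permuting the arguments (below a fixed prefix) gives equivalent terms. -/
theorem TermEquiv.perm (f : σ) {l l' : List (Term σ X)} (h : l.Perm l') :
    ∀ pre : List (Term σ X), TermEquiv (Term.app f (pre ++ l)) (Term.app f (pre ++ l')) := by
  induction h with
  | nil => exact fun pre => Relation.EqvGen.refl _
  | cons x h IH =>
    intro pre
    have := IH (pre ++ [x])
    simpa using this
  | swap x y l =>
    intro pre
    exact Relation.EqvGen.rel _ _ (Rewrite.root (SwapRoot.swap f pre y x l))
  | trans h1 h2 IH1 IH2 =>
    intro pre
    exact Relation.EqvGen.trans _ _ _ (IH1 pre) (IH2 pre)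

/-- The root symbol / children observation of a term. -/
def Term.obs : Term σ X → X ⊕ (σ × Multiset (Tree σ X))
  | .var x => .inl x
  | .app f ts => .inr (f, ↑(ts.map Tree.mk))

theorem TermEquiv.obs_eq {s t : Term σ X} (h : TermEquiv s t) : s.obs = t.obs := by
  induction h with
  | rel a b hab =>
    clear * - hab
    induction hab with
    | root hr =>
      rcases hr with ⟨f, us, x, y, ws⟩
      simp only [Term.obs, Sum.inr.injEq, Prod.mk.injEq, true_and, List.map_append,
        List.map_cons]
      rw [Multiset.coe_eq_coe]
      exact (List.Perm.swap (Tree.mk y) (Tree.mk x) _).append_left _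
    | @congr s t f pre post hst IH =>
      have hmk : Tree.mk s = Tree.mk t := Quot.sound (Relation.EqvGen.rel _ _ hst)
      simp only [Term.obs, Sum.inr.injEq, Prod.mk.injEq, true_and, List.map_append,
        List.map_cons]
      rw [hmk]
  | refl a => rfl
  | symm a b _ IH => exact IH.symm
  | trans a b c _ _ IH1 IH2 => exact IH1.trans IH2

theorem TermEquiv.of_children (f : σ) {ss ts : List (Term σ X)}
    (h : (ss.map Tree.mk).Perm (ts.map Tree.mk)) :
    TermEquiv (Term.app f ss) (Term.app f ts) := by
  suffices H : ∀ (n : ℕ) (ss ts : List (Term σ X)), ss.length ≤ n →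
      (ss.map Tree.mk).Perm (ts.map Tree.mk) →
      ∀ pre, TermEquiv (Term.app f (pre ++ ss)) (Term.app f (pre ++ ts)) by
    simpa using H ss.length ss ts le_rfl h []
  intro n
  induction n with
  | zero =>
    intro ss ts hlen h pre
    have hss : ss = [] := List.length_eq_zero_iff.mp (Nat.le_zero.mp hlen)
    subst hss
    have hts : ts = [] := List.map_eq_nil_iff.mp (List.perm_nil.mp h.symm)
    subst hts
    exact Relation.EqvGen.refl _
  | succ n IH =>
    intro ss ts hlen h pre
    match ss with
    | [] =>
      rw [(List.map_eq_nil_iff.mp (List.perm_nil.mp h.symm) : ts = [])]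
      exact Relation.EqvGen.refl _
    | a :: ss' =>
      have hmem : Tree.mk a ∈ ts.map Tree.mk := h.mem_iff.mp (by simp)
      rcases List.mem_map.mp hmem with ⟨b, hb, hba⟩
      rcases List.append_of_mem hb with ⟨t1, t2, rfl⟩
      have hperm1 : (t1 ++ b :: t2).Perm (b :: (t1 ++ t2)) := List.perm_middle
      have e1 : TermEquiv (Term.app f (pre ++ (t1 ++ b :: t2)))
          (Term.app f (pre ++ (b :: (t1 ++ t2)))) := TermEquiv.perm f hperm1 pre
      have e2 : TermEquiv (Term.app f (pre ++ b :: (t1 ++ t2)))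
          (Term.app f (pre ++ a :: (t1 ++ t2))) :=
        TermEquiv.congr f pre (t1 ++ t2) (Quotient.exact hba)
      have hperm2 : (ss'.map Tree.mk).Perm ((t1 ++ t2).map Tree.mk) := by
        have : ((a :: ss').map Tree.mk).Perm (Tree.mk a :: (t1 ++ t2).map Tree.mk) := by
          refine h.trans ?_
          rw [← hba]
          simpa using List.perm_middle
        exact (List.perm_cons (Tree.mk a)).mp (by simpa using this)
      have e3 : TermEquiv (Term.app f ((pre ++ [a]) ++ ss'))
          (Term.app f ((pre ++ [a]) ++ (t1 ++ t2))) :=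
        IH ss' (t1 ++ t2) (by simpa using hlen) hperm2 (pre ++ [a])
      refine Relation.EqvGen.trans _ _ _ ?_
        (Relation.EqvGen.trans _ _ _ (Relation.EqvGen.symm _ _ e2) (Relation.EqvGen.symm _ _ e1))
      simpa [TermEquiv] using e3

theorem Uses.iff_of_equiv {p : σ → Prop} {s t : Term σ X} (h : TermEquiv s t) :
    Uses p s ↔ Uses p t := by
  induction h with
  | rel a b hab =>
    clear * - hab
    induction hab with
    | root hr =>
      rcases hr with ⟨f, us, x, y, ws⟩
      constructor <;> rintro (_ | ⟨f, ts, hf, hts⟩) <;>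
        exact Uses.app f _ hf (fun t ht => hts t (by
          simp only [List.mem_append, List.mem_cons] at ht ⊢; tauto))
    | @congr s t f pre post hst IH =>
      constructor <;> rintro (_ | ⟨f, ts, hf, hts⟩) <;>
        refine Uses.app f _ hf (fun u hu => ?_)
      · rcases List.mem_append.mp hu with h1 | h1
        · exact hts u (by simp [h1])
        · rcases List.mem_cons.mp h1 with rfl | h2
          · exact IH.mp (hts s (by simp))
          · exact hts u (by simp [h2])
      · rcases List.mem_append.mp hu with h1 | h1
        · exact hts u (by simp [h1])
        · rcases List.mem_cons.mp h1 with rfl | h2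
          · exact IH.mpr (hts t (by simp))
          · exact hts u (by simp [h2])
  | refl a => exact Iff.rfl
  | symm a b _ IH => exact IH.symm
  | trans a b c _ _ IH1 IH2 => exact IH1.trans IH2

theorem SwapStep.relabel (h : σ → σ') {s t : Term σ X} (hst : SwapStep s t) :
    SwapStep (s.relabel h) (t.relabel h) := by
  induction hst with
  | root hr =>
    rcases hr with ⟨f, us, x, y, ws⟩
    rw [Term.relabel_app, Term.relabel_app]
    simp only [List.map_append, List.map_cons]
    exact Rewrite.root (SwapRoot.swap (h f) _ _ _ _)
  | @congr s t f pre post hst IH =>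
    rw [Term.relabel_app, Term.relabel_app]
    simp only [List.map_append, List.map_cons]
    exact Rewrite.congr (h f) _ _ IH

theorem TermEquiv.relabel (h : σ → σ') {s t : Term σ X} (hst : TermEquiv s t) :
    TermEquiv (s.relabel h) (t.relabel h) := by
  induction hst with
  | rel a b hab => exact Relation.EqvGen.rel _ _ (hab.relabel h)
  | refl a => exact Relation.EqvGen.refl _
  | symm a b _ IH => exact Relation.EqvGen.symm _ _ IH
  | trans a b c _ _ IH1 IH2 => exact Relation.EqvGen.trans _ _ _ IH1 IH2

/-- Induction principle for trees producing `Tree.mk` goals. -/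
theorem Tree.ind {motive : Tree σ X → Prop} (h : ∀ t, motive (Tree.mk t)) (T : Tree σ X) :
    motive T := Quot.ind h T

/-- Children of a tree, as a multiset of trees. -/
def Tree.child : Tree σ X → Multiset (Tree σ X) :=
  Quotient.lift (fun t : Term σ X =>
      match t with
      | .var _ => (0 : Multiset (Tree σ X))
      | .app _ ts => ↑(ts.map Tree.mk))
    (by
      rintro (⟨x⟩ | ⟨f, ss⟩) (⟨y⟩ | ⟨g, ts⟩) hab
      · rfl
      · exact absurd (TermEquiv.obs_eq hab) (by simp [Term.obs])
      · exact absurd (TermEquiv.obs_eq hab) (by simp [Term.obs])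
      · have := TermEquiv.obs_eq hab
        simp only [Term.obs, Sum.inr.injEq, Prod.mk.injEq] at this
        exact this.2)

/-- Root label of a tree (no variables). -/
def Tree.root : Tree σ Empty → σ :=
  Quotient.lift (fun t : Term σ Empty =>
      match t with
      | .var x => x.elim
      | .app f _ => f)
    (by
      rintro (⟨x⟩ | ⟨f, ss⟩) (⟨y⟩ | ⟨g, ts⟩) hab
      · exact x.elim
      · exact x.elim
      · exact y.elim
      · have := TermEquiv.obs_eq hab
        simp only [Term.obs, Sum.inr.injEq, Prod.mk.injEq] at this
        exact this.1)

@[simp] theorem Tree.root_mk (f : σ) (ts : List (Term σ Empty)) :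
    (Tree.mk (Term.app f ts)).root = f := rfl

@[simp] theorem Tree.child_mk (f : σ) (ts : List (Term σ X)) :
    (Tree.mk (Term.app f ts)).child = ↑(ts.map Tree.mk) := rfl

/-- Extensionality for trees over `Empty`. -/
theorem Tree.ext {T T' : Tree σ Empty} (hr : T.root = T'.root)
    (hc : T.child = T'.child) : T = T' := by
  induction T using Tree.ind with | h s =>
  induction T' using Tree.ind with | h t =>
  match s, t with
  | .var x, _ => exact x.elim
  | _, .var y => exact y.elim
  | .app f ss, .app g ts =>
    simp only [Tree.root_mk, Tree.child_mk, Multiset.coe_eq_coe] at hr hc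
    subst hr
    exact Quot.sound (TermEquiv.of_children f hc)

/-- Lifted `Uses`. -/
def Tree.uses (p : σ → Prop) : Tree σ X → Prop :=
  Quotient.lift (fun t : Term σ X => Uses p t)
    (fun _ _ hab => propext (Uses.iff_of_equiv hab))

@[simp] theorem Tree.uses_mk (p : σ → Prop) (t : Term σ X) :
    (Tree.mk t).uses p ↔ Uses p t := Iff.rfl

/-- Lifted relabeling. -/
def Tree.relabel (h : σ → σ') : Tree σ X → Tree σ' X :=
  Quotient.lift (fun t : Term σ X => Tree.mk (t.relabel h))
    (fun _ _ hab => Quot.sound (TermEquiv.relabel h hab))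

@[simp] theorem Tree.relabel_mk (h : σ → σ') (t : Term σ X) :
    Tree.relabel h (Tree.mk t) = Tree.mk (t.relabel h) := rfl

@[simp] theorem Tree.root_relabel (h : σ → σ') (T : Tree σ Empty) :
    (T.relabel h).root = h T.root := by
  induction T using Tree.ind with | h s =>
  match s with
  | .var x => exact x.elim
  | .app f ts =>
    rw [Tree.relabel_mk, Term.relabel_app, Tree.root_mk, Tree.root_mk]

@[simp] theorem Tree.child_relabel (h : σ → σ') (T : Tree σ X) :
    (T.relabel h).child = T.child.map (Tree.relabel h) := by
  induction T using Tree.ind with | h s =>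
  match s with
  | .var x =>
    rw [Tree.relabel_mk, show (Term.var x : Term σ X).relabel h = Term.var x from
      by rw [Term.relabel]]
    rfl
  | .app f ts =>
    rw [Tree.relabel_mk, Term.relabel_app, Tree.child_mk, Tree.child_mk,
      Multiset.map_coe, List.map_map, List.map_map]
    rfl

theorem Tree.relabel_relabel {σ''} (h : σ → σ') (h' : σ' → σ'') (T : Tree σ X) :
    (T.relabel h).relabel h' = T.relabel (h' ∘ h) := by
  obtain ⟨s, rfl⟩ := Quotient.exists_rep T
  show Tree.mk _ = Tree.mk _
  rw [Term.relabel_comp]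

end Infra

section Mpo

variable {S : Type} (lt : S → S → Prop)

/-- A (singleton-step) multiset path order on unordered trees. -/
inductive Mlt : Tree S Empty → Tree S Empty → Prop
  | prec {s t : Tree S Empty} :
      lt s.root t.root → (∀ Y ∈ s.child, Mlt Y t) → Mlt s t
  | args {s t : Tree S Empty} (z : Tree S Empty) (W rest : Multiset (Tree S Empty)) :
      s.root = t.root → t.child = z ::ₘ rest → s.child = W + rest →
      (∀ w ∈ W, Mlt w z) → Mlt s t

/-- One-step multiset extension of `Mlt`. -/
def Mult1 (N M : Multiset (Tree S Empty)) : Prop :=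
  ∃ a M₀ K, M = a ::ₘ M₀ ∧ N = K + M₀ ∧ ∀ b ∈ K, Mlt lt b a

theorem acc_mult1_cons {a : Tree S Empty} (ha : Acc (Mlt lt) a) :
    ∀ M, Acc (Mult1 lt) M → Acc (Mult1 lt) (a ::ₘ M) := by
  induction ha with
  | intro a _ IH1 =>
    intro M hM
    induction hM with
    | intro M hM IH2 =>
      constructor
      rintro N ⟨b, M₀, K, hM1, rfl, hK⟩
      rcases (Multiset.cons_eq_cons).mp hM1 with ⟨rfl, rfl⟩ | ⟨hne, cs, hM2, hM02⟩
      · -- replace `a` itself by the smaller multiset `K`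
        clear hM1
        induction K using Multiset.induction with
        | empty => simpa using Acc.intro M hM
        | cons k K IHK =>
          have hacc : Acc (Mult1 lt) (K + M) := IHK (fun b hb => hK b (by simp [hb]))
          have := IH1 k (hK k (by simp)) (K + M) hacc
          simpa [Multiset.cons_add] using this
      · -- the step happened inside `M`
        subst hM02
        have hstep : Mult1 lt (K + cs) M := ⟨b, cs, K, hM2, rfl, hK⟩
        have := IH2 (K + cs) hstep
        have heq : K + (a ::ₘ cs) = a ::ₘ (K + cs) := by
          rw [← Multiset.singleton_add, ← Multiset.singleton_add]
          rw [← add_assoc, add_comm K {a}, add_assoc]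
        rw [heq]
        exact this

theorem acc_mult1 (M : Multiset (Tree S Empty)) (h : ∀ x ∈ M, Acc (Mlt lt) x) :
    Acc (Mult1 lt) M := by
  induction M using Multiset.induction with
  | empty =>
    constructor
    rintro N ⟨a, M₀, K, hM1, _, _⟩
    exact absurd hM1.symm (Multiset.cons_ne_zero)
  | cons a M IH =>
    exact acc_mult1_cons lt (h a (by simp)) M (IH (fun x hx => h x (by simp [hx])))

variable (hwf : WellFounded lt)

include hwf

theorem acc_mlt_node (n : S) :
    ∀ T : Tree S Empty, T.root = n → (∀ Y ∈ T.child, Acc (Mlt lt) Y) → Acc (Mlt lt) T := by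
  induction n using WellFounded.induction hwf with
  | _ n IH1 =>
    suffices H : ∀ M : Multiset (Tree S Empty), Acc (Mult1 lt) M →
        ∀ T : Tree S Empty, T.root = n → T.child = M → (∀ Y ∈ M, Acc (Mlt lt) Y) →
          Acc (Mlt lt) T by
      intro T hr hch
      exact H T.child (acc_mult1 lt _ hch) T hr rfl hch
    intro M hM
    induction hM with
    | intro M hMpred IH2 =>
      intro T hr hc hch
      constructor
      intro s hs
      -- induction on the derivation of `Mlt s T`
      have key : ∀ s T', Mlt lt s T' → T' = T → Acc (Mlt lt) s := by
        intro s T' h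
        induction h with
        | @prec s T' hlt hall IHall =>
          rintro rfl
          exact IH1 s.root (hr ▸ hlt) s rfl (fun Y hY => IHall Y hY rfl)
        | @args s T' z W rest hroot hct hcs hW =>
          rintro rfl
          have hz : z ∈ M := by rw [← hc, hct]; exact Multiset.mem_cons_self _ _
          have haccz : Acc (Mlt lt) z := hch z hz
          have hWacc : ∀ w ∈ W, Acc (Mlt lt) w := fun w hw => haccz.inv (hW w hw)
          have hrest : ∀ x ∈ rest, Acc (Mlt lt) x := fun x hx => by
            refine hch x ?_
            rw [← hc, hct]
            exact Multiset.mem_cons_of_mem hx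
          refine IH2 s.child ⟨z, rest, W, by rw [← hc, hct], hcs, hW⟩ s
            (hroot.trans hr) rfl ?_
          intro Y hY
          rw [hcs] at hY
          rcases Multiset.mem_add.mp hY with h1 | h1
          · exact hWacc Y h1
          · exact hrest Y h1
      exact key s T hs rfl

theorem mlt_wf : WellFounded (Mlt lt) := by
  constructor
  intro T
  induction T using Tree.ind with | h t =>
  induction t using Term.indOn with
  | hv x => exact x.elim
  | ha f ts IH =>
    refine acc_mlt_node lt hwf f (Tree.mk (Term.app f ts)) rfl ?_
    intro Y hY
    rw [Tree.child_mk] at hY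
    rcases List.mem_map.mp (by exact_mod_cast hY) with ⟨x, hx, rfl⟩
    exact IH x hx

end Mpo

section Dec

variable {S : Type}

/-- Erasing the underline marks. -/
def ET : Tree (SHSig S) Empty → Tree S Empty := Tree.relabel Prod.fst

/-- Injecting plain trees into marked trees. -/
def UT : Tree S Empty → Tree (SHSig S) Empty := Tree.relabel (fun a => (a, false))

def leafT (α : S) : Tree S Empty := Tree.mk (Term.app α [])

@[simp] theorem leafT_root (α : S) : (leafT α).root = α := rfl
@[simp] theorem leafT_child (α : S) : (leafT α).child = 0 := rfl

theorem Term.uses_true (t : Term σ X) : Uses (fun _ => True) t := by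
  induction t using Term.indOn with
  | hv x => exact Uses.var x
  | ha f ts IH => exact Uses.app f ts trivial IH

theorem Tree.relabel_id (T : Tree σ X) : T.relabel (fun a => a) = T := by
  induction T using Tree.ind with | h t =>
  rw [Tree.relabel_mk,
    Term.relabel_id_of_uses (fun a _ => rfl) t (Term.uses_true t)]

@[simp] theorem et_ut (C : Tree S Empty) : ET (UT C) = C := by
  rw [ET, UT, Tree.relabel_relabel]
  exact Tree.relabel_id C

@[simp] theorem root_UT (C : Tree S Empty) : (UT C).root = (C.root, false) :=
  Tree.root_relabel _ C

@[simp] theorem root_ET (T : Tree (SHSig S) Empty) : (ET T).root = T.root.1 :=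
  Tree.root_relabel _ T

theorem child_ET (T : Tree (SHSig S) Empty) : (ET T).child = T.child.map ET :=
  Tree.child_relabel _ T

theorem plain_UT (C : Tree S Empty) : (UT C).uses (fun a : SHSig S => a.2 = false) := by
  induction C using Tree.ind with | h t =>
  rw [UT, Tree.relabel_mk, Tree.uses_mk]
  induction t using Term.indOn with
  | hv x => exact x.elim
  | ha f ts IH =>
    rw [Term.relabel_app]
    refine Uses.app _ _ rfl ?_
    intro u hu
    rcases List.mem_map.mp hu with ⟨x, hx, rfl⟩
    exact IH x hx

variable (lt : S → S → Prop)

/-- `BelowT α T`: all labels of the marked tree `T` are strictly below `α`. -/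
def BelowT (α : S) (T : Tree (SHSig S) Empty) : Prop :=
  T.uses (fun a : SHSig S => lt a.1 α)

/-- The simulation invariant: `Dec X T` says the marked tree `T` is a legal
in-progress descendant of the plain tree `X` (one chop has happened inside). -/
inductive Dec : Tree S Empty → Tree (SHSig S) Empty → Prop
  | chop {X T} (n α : S) (CS : Multiset (Tree S Empty))
      (B : Multiset (Tree (SHSig S) Empty)) :
      X.root = n → X.child = leafT α ::ₘ CS →
      T.root.1 = n → T.child = B + CS.map UT →
      (∀ b ∈ B, BelowT lt α b) → Dec X T
  | spine {X T} (n : S) (C0 : Tree S Empty) (CS : Multiset (Tree S Empty))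
      (T0s : Multiset (Tree (SHSig S) Empty)) :
      X.root = n → X.child = C0 ::ₘ CS →
      T.root.1 = n → T.child = T0s + CS.map UT →
      (∀ Y ∈ T0s, Dec C0 Y) → Dec X T
  | above {X T} (m : S) : lt m X.root → T.root.1 = m →
      (∀ Y ∈ T.child, Dec X Y) → Dec X T

theorem Dec.root_le {X T} (h : Dec lt X T) :
    T.root.1 = X.root ∨ lt T.root.1 X.root := by
  cases h with
  | chop n α CS B hXr hXc hTr hTc hB => exact Or.inl (by rw [hTr, hXr])
  | spine n C0 CS T0s hXr hXc hTr hTc hT => exact Or.inl (by rw [hTr, hXr])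
  | above m hm hTr hall => exact Or.inr (by rw [hTr]; exact hm)

theorem Dec.transport {X T T'} (h : Dec lt X T) (hr : T.root.1 = T'.root.1)
    (hc : T.child = T'.child) : Dec lt X T' := by
  cases h with
  | chop n α CS B hXr hXc hTr hTc hB =>
    exact Dec.chop n α CS B hXr hXc (hr ▸ hTr) (hc ▸ hTc) hB
  | spine n C0 CS T0s hXr hXc hTr hTc hT =>
    exact Dec.spine n C0 CS T0s hXr hXc (hr ▸ hTr) (hc ▸ hTc) hT
  | above m hm hTr hall =>
    exact Dec.above m hm (hr ▸ hTr) (fun Y hY => hall Y (hc ▸ hY))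

theorem below_mlt {α : S} : ∀ (u : Term (SHSig S) Empty),
    Uses (fun a : SHSig S => lt a.1 α) u → Mlt lt (ET (Tree.mk u)) (leafT α) := by
  intro u
  induction u using Term.indOn with
  | hv x => exact x.elim
  | ha f ts IH =>
    intro h
    rcases h with _ | ⟨f, ts, hf, hts⟩
    rw [ET, Tree.relabel_mk, Term.relabel_app]
    refine Mlt.prec (by simpa using hf) ?_
    intro Y hY
    rw [Tree.child_mk] at hY
    rcases List.mem_map.mp (by exact_mod_cast hY) with ⟨y, hy, rfl⟩
    rcases List.mem_map.mp hy with ⟨x, hx, rfl⟩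
    exact IH x hx (hts x hx)

theorem belowT_mlt {α : S} {b : Tree (SHSig S) Empty} (h : BelowT lt α b) :
    Mlt lt (ET b) (leafT α) := by
  induction b using Tree.ind with | h u =>
  exact below_mlt lt u h

/-- Soundness of the invariant: the erased descendant is `Mlt`-below the original. -/
theorem Dec.mlt {X T} (h : Dec lt X T) : Mlt lt (ET T) X := by
  induction h with
  | chop n α CS B hXr hXc hTr hTc hB =>
    refine Mlt.args (leafT α) (B.map ET) CS (by rw [root_ET, hTr, hXr]) hXc ?_ ?_
    · rw [child_ET, hTc, Multiset.map_add, Multiset.map_map]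
      congr 1
      rw [show (ET ∘ UT) = id from funext fun C => et_ut C, Multiset.map_id]
    · intro w hw
      rcases Multiset.mem_map.mp hw with ⟨b, hb, rfl⟩
      exact belowT_mlt lt (hB b hb)
  | spine n C0 CS T0s hXr hXc hTr hTc hT IH =>
    refine Mlt.args C0 (T0s.map ET) CS (by rw [root_ET, hTr, hXr]) hXc ?_ ?_
    · rw [child_ET, hTc, Multiset.map_add, Multiset.map_map]
      congr 1
      rw [show (ET ∘ UT) = id from funext fun C => et_ut C, Multiset.map_id]
    · intro w hw
      rcases Multiset.mem_map.mp hw with ⟨b, hb, rfl⟩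
      exact IH b hb
  | above m hm hTr hall IH =>
    refine Mlt.prec (by rw [root_ET, hTr]; exact hm) ?_
    intro Y hY
    rw [child_ET] at hY
    rcases Multiset.mem_map.mp hY with ⟨b, hb, rfl⟩
    exact IH b hb

/-- Union of the four mark-manipulating root rules. -/
def R4 (lt : S → S → Prop) : Term (SHSig S) Empty → Term (SHSig S) Empty → Prop :=
  fun s t => PropagateRoot s t ∨ WidenRoot s t ∨ LengthenRoot lt s t ∨ WaiveRoot s t

theorem Rewrite.mono {σ X : Type} {R R' : Term σ X → Term σ X → Prop}
    (h : ∀ s t, R s t → R' s t) {s t : Term σ X} (hr : Rewrite R s t) : Rewrite R' s t := by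
  induction hr with
  | root hroot => exact Rewrite.root (h _ _ hroot)
  | congr f pre post _ IH => exact Rewrite.congr f pre post IH

theorem coe_map_middle {α β : Type*} (g : α → β) (pre post : List α) (u : α) :
    (↑((pre ++ u :: post).map g) : Multiset β) = g u ::ₘ ↑((pre ++ post).map g) := by
  simp only [List.map_append, List.map_cons]
  rw [Multiset.cons_coe, Multiset.coe_eq_coe]
  exact List.perm_middle

theorem mem_split_add {α : Type*} {x : α} {P Q Y : Multiset α}
    (h : x ::ₘ Y = P + Q) (hx : x ∈ P) : ∃ P', P = x ::ₘ P' ∧ Y = P' + Q := by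
  rcases Multiset.exists_cons_of_mem hx with ⟨P', rfl⟩
  refine ⟨P', rfl, ?_⟩
  rw [Multiset.cons_add] at h
  exact (Multiset.cons_inj_right x).mp h

theorem not_mem_map_UT {x : Tree (SHSig S) Empty} (hx : x.root.2 = true)
    (CS : Multiset (Tree S Empty)) : x ∉ CS.map UT := by
  intro h
  rcases Multiset.mem_map.mp h with ⟨C, _, rfl⟩
  rw [root_UT] at hx
  exact Bool.false_ne_true hx

theorem plain_no_step {s t : Term (SHSig S) Empty}
    (hs : Uses (fun a : SHSig S => a.2 = false) s) (h : Rewrite (R4 lt) s t) : False := by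
  induction h with
  | root hr =>
    rcases hr with h | h | h | h
    · rcases h with ⟨n, m, xs, ys⟩
      rcases hs with _ | ⟨_, _, hf, hts⟩
      have := hts _ List.mem_cons_self
      rcases this with _ | ⟨_, _, hg, _⟩
      simp at hg
    · rcases h with ⟨n, m, k, xs, ys⟩
      rcases hs with _ | ⟨_, _, hf, _⟩
      simp at hf
    · rcases h with ⟨n, m, xs, hmn⟩
      rcases hs with _ | ⟨_, _, hf, _⟩
      simp at hf
    · rcases h with ⟨m, xs⟩
      rcases hs with _ | ⟨_, _, hf, _⟩
      simp at hf
  | congr f pre post hst IH =>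
    rcases hs with _ | ⟨_, _, hf, hts⟩
    exact IH (hts _ (by simp))

theorem below_step {α : S} (htrans : Transitive lt) {s t : Term (SHSig S) Empty}
    (h : Rewrite (R4 lt) s t) (hs : Uses (fun a : SHSig S => lt a.1 α) s) :
    Uses (fun a : SHSig S => lt a.1 α) t := by
  induction h with
  | root hr =>
    rcases hr with h | h | h | h
    · rcases h with ⟨n, m, xs, ys⟩
      rcases hs with _ | ⟨_, _, hf, hts⟩
      exact Uses.app _ _ (by simpa using hf) hts
    · rcases h with ⟨n, m, k, xs, ys⟩
      rcases hs with _ | ⟨_, _, hf, hts⟩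
      refine Uses.app _ _ hf ?_
      intro u hu
      rcases List.mem_append.mp hu with h1 | h1
      · rw [List.eq_of_mem_replicate h1]
        exact hts _ List.mem_cons_self
      · exact hts _ (List.mem_cons_of_mem _ h1)
    · rcases h with ⟨n, m, xs, hmn⟩
      rcases hs with _ | ⟨_, _, hf, hts⟩
      refine Uses.app _ _ (htrans hmn (by simpa using hf)) ?_
      intro u hu
      rw [List.mem_singleton.mp hu]
      exact Uses.app _ _ hf hts
    · rcases h with ⟨m, xs⟩
      rcases hs with _ | ⟨_, _, hf, hts⟩
      exact Uses.app _ _ (by simpa using hf) hts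
  | congr f pre post hst IH =>
    rcases hs with _ | ⟨_, _, hf, hts⟩
    refine Uses.app _ _ hf ?_
    intro u hu
    rcases List.mem_append.mp hu with h1 | h1
    · exact hts _ (by simp [h1])
    · rcases List.mem_cons.mp h1 with rfl | h2
      · exact IH (hts _ (by simp))
      · exact hts _ (by simp [h2])

theorem dec_step (htrans : Transitive lt) {s t : Term (SHSig S) Empty}
    (h : Rewrite (R4 lt) s t) :
    ∀ X, Dec lt X (Tree.mk s) → Dec lt X (Tree.mk t) := by
  induction h with
  | root hr =>
    rcases hr with h | h | h | h
    · -- propagate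
      rcases h with ⟨n, m, xs, ys⟩
      intro X hX
      exact hX.transport lt rfl rfl
    · -- widen
      rcases h with ⟨n, m, k, xs, ys⟩
      intro X hX
      set c : Term (SHSig S) Empty := Term.app (m, true) xs with hc
      have hsc : (Tree.mk (Term.app (n, true) (c :: ys))).child
          = Tree.mk c ::ₘ ↑(ys.map Tree.mk) := by
        rw [Tree.child_mk, List.map_cons, Multiset.cons_coe]
      have htc : (Tree.mk (Term.app (n, true) (List.replicate k c ++ ys))).child
          = Multiset.replicate k (Tree.mk c) + ↑(ys.map Tree.mk) := by
        rw [Tree.child_mk, List.map_append, List.map_replicate, ← Multiset.coe_add,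
          Multiset.coe_replicate]
      have hcroot : (Tree.mk c).root.2 = true := rfl
      cases hX with
      | chop n' α CS B hXr hXc hTr hTc hB =>
        rw [hsc] at hTc
        have hmem : Tree.mk c ∈ B + CS.map UT := by rw [← hTc]; exact Multiset.mem_cons_self _ _
        have hmemB : Tree.mk c ∈ B := by
          rcases Multiset.mem_add.mp hmem with h1 | h1
          · exact h1
          · exact absurd h1 (not_mem_map_UT hcroot CS)
        obtain ⟨B', rfl, hY⟩ := mem_split_add hTc hmemB
        refine Dec.chop n' α CS (Multiset.replicate k (Tree.mk c) + B') hXr hXc hTr ?_ ?_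
        · rw [htc, hY, add_assoc]
        · intro b hb
          rcases Multiset.mem_add.mp hb with h1 | h1
          · rw [Multiset.eq_of_mem_replicate h1]
            exact hB _ hmemB
          · exact hB _ (Multiset.mem_cons_of_mem h1)
      | spine n' C0 CS T0s hXr hXc hTr hTc hT =>
        rw [hsc] at hTc
        have hmem : Tree.mk c ∈ T0s + CS.map UT := by
          rw [← hTc]; exact Multiset.mem_cons_self _ _
        have hmemB : Tree.mk c ∈ T0s := by
          rcases Multiset.mem_add.mp hmem with h1 | h1
          · exact h1
          · exact absurd h1 (not_mem_map_UT hcroot CS)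
        obtain ⟨B', rfl, hY⟩ := mem_split_add hTc hmemB
        refine Dec.spine n' C0 CS (Multiset.replicate k (Tree.mk c) + B') hXr hXc hTr ?_ ?_
        · rw [htc, hY, add_assoc]
        · intro b hb
          rcases Multiset.mem_add.mp hb with h1 | h1
          · rw [Multiset.eq_of_mem_replicate h1]
            exact hT _ hmemB
          · exact hT _ (Multiset.mem_cons_of_mem h1)
      | above m' hm hTr hall =>
        refine Dec.above m' hm hTr ?_
        intro Y hY
        rw [htc] at hY
        rcases Multiset.mem_add.mp hY with h1 | h1
        · rw [Multiset.eq_of_mem_replicate h1]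
          exact hall _ (by rw [hsc]; exact Multiset.mem_cons_self _ _)
        · exact hall _ (by rw [hsc]; exact Multiset.mem_cons_of_mem h1)
    · -- lengthen
      rcases h with ⟨n, m, xs, hmn⟩
      intro X hX
      have hle := hX.root_le lt
      have hroot : (Tree.mk (Term.app ((n : S), true) xs)).root.1 = n := rfl
      rw [hroot] at hle
      have hlt : lt m X.root := by
        rcases hle with h1 | h1
        · rw [← h1]; exact hmn
        · exact htrans hmn h1
      refine Dec.above m hlt rfl ?_
      intro Y hY
      rw [Tree.child_mk] at hY
      simp only [List.map_cons, List.map_nil] at hY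
      rw [show Y = Tree.mk (Term.app ((n : S), true) xs) by simpa using hY]
      exact hX
    · -- waive
      rcases h with ⟨m, xs⟩
      intro X hX
      exact hX.transport lt rfl rfl
  | @congr u u' f pre post hst IH =>
    intro X hX
    have hsc : (Tree.mk (Term.app f (pre ++ u :: post))).child
        = Tree.mk u ::ₘ ↑((pre ++ post).map Tree.mk) := by
      rw [Tree.child_mk, coe_map_middle]
    have htc : (Tree.mk (Term.app f (pre ++ u' :: post))).child
        = Tree.mk u' ::ₘ ↑((pre ++ post).map Tree.mk) := by
      rw [Tree.child_mk, coe_map_middle]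
    cases hX with
    | chop n α CS B hXr hXc hTr hTc hB =>
      rw [hsc] at hTc
      have hmem : Tree.mk u ∈ B + CS.map UT := by rw [← hTc]; exact Multiset.mem_cons_self _ _
      rcases Multiset.mem_add.mp hmem with h1 | h1
      · obtain ⟨B', rfl, hY⟩ := mem_split_add hTc h1
        have hbel : Uses (fun a : SHSig S => lt a.1 α) u := hB _ h1
        have hbel' : BelowT lt α (Tree.mk u') :=
          (Tree.uses_mk _ _).mpr (below_step lt htrans hst hbel)
        refine Dec.chop n α CS (Tree.mk u' ::ₘ B') hXr hXc hTr ?_ ?_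
        · rw [htc, hY, Multiset.cons_add]
        · intro b hb
          rcases Multiset.mem_cons.mp hb with rfl | h2
          · exact hbel'
          · exact hB _ (Multiset.mem_cons_of_mem h2)
      · rcases Multiset.mem_map.mp h1 with ⟨C, _, hCu⟩
        have hplain : Uses (fun a : SHSig S => a.2 = false) u :=
          (Tree.uses_mk _ _).mp (hCu ▸ plain_UT C)
        exact absurd hst (fun hh => plain_no_step lt hplain hh)
    | spine n C0 CS T0s hXr hXc hTr hTc hT =>
      rw [hsc] at hTc
      have hmem : Tree.mk u ∈ T0s + CS.map UT := by
        rw [← hTc]; exact Multiset.mem_cons_self _ _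
      rcases Multiset.mem_add.mp hmem with h1 | h1
      · obtain ⟨B', rfl, hY⟩ := mem_split_add hTc h1
        have hdec' : Dec lt C0 (Tree.mk u') := IH C0 (hT _ h1)
        refine Dec.spine n C0 CS (Tree.mk u' ::ₘ B') hXr hXc hTr ?_ ?_
        · rw [htc, hY, Multiset.cons_add]
        · intro b hb
          rcases Multiset.mem_cons.mp hb with rfl | h2
          · exact hdec'
          · exact hT _ (Multiset.mem_cons_of_mem h2)
      · rcases Multiset.mem_map.mp h1 with ⟨C, _, hCu⟩
        have hplain : Uses (fun a : SHSig S => a.2 = false) u :=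
          (Tree.uses_mk _ _).mp (hCu ▸ plain_UT C)
        exact absurd hst (fun hh => plain_no_step lt hplain hh)
    | above m hm hTr hall =>
      refine Dec.above m hm hTr ?_
      intro Y hY
      rw [htc] at hY
      rcases Multiset.mem_cons.mp hY with rfl | h2
      · exact IH X (hall _ (by rw [hsc]; exact Multiset.mem_cons_self _ _))
      · exact hall _ (by rw [hsc]; exact Multiset.mem_cons_of_mem h2)

theorem ut_et_plain {x : Term (SHSig S) Empty}
    (hx : Uses (fun a : SHSig S => a.2 = false) x) :
    UT (ET (Tree.mk x)) = Tree.mk x := by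
  rw [ET, UT, Tree.relabel_mk, Tree.relabel_mk, Term.relabel_comp]
  congr 1
  refine Term.relabel_id_of_uses ?_ x hx
  rintro ⟨a, b⟩ hab
  simp only at hab
  simp [hab]

theorem chop_dec {s t : Term (SHSig S) Empty} (h : Rewrite (ChopRoot lt) s t)
    (hp : Uses (fun a : SHSig S => a.2 = false) s) :
    Dec lt (ET (Tree.mk s)) (Tree.mk t) := by
  induction h with
  | root hr =>
    cases hr with
    | chop n α βs xs hβ =>
      rcases hp with _ | ⟨_, _, _, hts⟩
      have hxs : ∀ x ∈ xs, Uses (fun a : SHSig S => a.2 = false) x :=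
        fun x hx => hts x (List.mem_cons_of_mem _ hx)
      refine Dec.chop n α (↑(xs.map (fun x => ET (Tree.mk x))))
        (↑(βs.map (fun β =>
            Tree.mk (Term.app ((β : S), true) ([] : List (Term (SHSig S) Empty))))))
        ?_ ?_ rfl ?_ ?_
      · rw [ET, Tree.relabel_mk, Term.relabel_app, Tree.root_mk]
      · have hhead : (Term.app ((α, false) : SHSig S)
            ([] : List (Term (SHSig S) Empty))).relabel Prod.fst = Term.app α [] := by
          rw [Term.relabel_app]; rfl
        rw [ET, Tree.relabel_mk, Term.relabel_app, Tree.child_mk, List.map_cons, hhead]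
        simp only [List.map_cons, Multiset.cons_coe, List.map_map]
        rfl
      · rw [Tree.child_mk, List.map_append, ← Multiset.coe_add, List.map_map,
          Multiset.map_coe, List.map_map]
        congr 1
        refine congrArg _ (List.map_congr_left ?_)
        intro x hx
        exact (ut_et_plain (hxs x hx)).symm
      · intro b hb
        rcases List.mem_map.mp (Multiset.mem_coe.mp hb) with ⟨β, hβ', rfl⟩
        exact Uses.app _ _ (hβ β hβ') (by intro t ht; simp at ht)
  | @congr u u' f pre post hst IH =>
    rcases hp with _ | ⟨_, _, hf, hts⟩
    have hu : Uses (fun a : SHSig S => a.2 = false) u := hts u (by simp)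
    have hxs : ∀ x ∈ pre ++ post, Uses (fun a : SHSig S => a.2 = false) x := by
      intro x hx
      rcases List.mem_append.mp hx with h1 | h1
      · exact hts x (by simp [h1])
      · exact hts x (by simp [h1])
    refine Dec.spine f.1 (ET (Tree.mk u)) (↑((pre ++ post).map (fun x => ET (Tree.mk x))))
      {Tree.mk u'} ?_ ?_ ?_ ?_ ?_
    · rw [ET, Tree.relabel_mk, Term.relabel_app, Tree.root_mk]
    · rw [ET, Tree.relabel_mk, Term.relabel_app, Tree.child_mk, List.map_map,
        coe_map_middle]
      rfl
    · rfl
    · rw [Tree.child_mk, coe_map_middle, ← Multiset.singleton_add, Multiset.map_coe,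
        List.map_map]
      congr 2
      refine (List.map_congr_left ?_)
      intro x hx
      exact (ut_et_plain (hxs x hx)).symm
    · intro Y hY
      rw [Multiset.mem_singleton.mp hY]
      exact IH hu

end Dec

/-- For any well-founded strictly partially ordered label set `(S, <)`, the Star
Hydra rewrite relation `→_SH` is strongly normalizing: there is no infinite
sequence `t₀ →_SH t₁ →_SH t₂ →_SH ⋯` of Star Hydras. -/
theorem star_hydra_sn
    {S : Type} (lt : S → S → Prop) (hirr : Irreflexive lt) (htrans : Transitive lt)
    (hwf : WellFounded lt) :
    ¬ ∃ f : ℕ → Tree (SHSig S) Empty,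
        (∀ n : ℕ, IsStarHydra (f n)) ∧
        (∀ n : ℕ, SHRel lt (f n) (f (n + 1))) := by
  rintro ⟨f, hH, hstep⟩
  have step_pres : ∀ {R : Term (SHSig S) Empty → Term (SHSig S) Empty → Prop},
      (∀ s t, R s t → R4 lt s t) →
      ∀ {X T T'}, TreeRel R T T' → Dec lt X T → Dec lt X T' := by
    intro R hR X T T' h hd
    obtain ⟨s', t', rfl, rfl, hrw'⟩ := h
    exact dec_step lt htrans (hrw'.mono hR) X hd
  have rtg_pres : ∀ {Q : Tree (SHSig S) Empty → Tree (SHSig S) Empty → Prop},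
      (∀ T T', Q T T' → ∀ X, Dec lt X T → Dec lt X T') →
      ∀ {T T'}, Relation.ReflTransGen Q T T' → ∀ X, Dec lt X T → Dec lt X T' := by
    intro Q hQ T T' h
    induction h with
    | refl => exact fun X hd => hd
    | tail _ hs IH => exact fun X hd => hQ _ _ hs X (IH X hd)
  have key : ∀ n, Mlt lt (ET (f (n + 1))) (ET (f n)) := by
    intro n
    obtain ⟨c, d, e, h1, h2, h3, h4⟩ := hstep n
    obtain ⟨s, t, hfs, hct, hrw⟩ := h1
    obtain ⟨p, hfp, hup⟩ := hH n
    have hsp : TermEquiv s p := Quotient.exact (hfs.symm.trans hfp)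
    have hus : Uses (fun a : SHSig S => a.2 = false) s := (Uses.iff_of_equiv hsp).mpr hup
    have hd0 : Dec lt (ET (f n)) c := by
      rw [hfs, hct]
      exact chop_dec lt hrw hus
    have hd1 : Dec lt (ET (f n)) d :=
      rtg_pres (fun T T' hq X hd => step_pres (fun _ _ h => Or.inl h) hq hd) h2.1 _ hd0
    have hd2 : Dec lt (ET (f n)) e := by
      refine rtg_pres ?_ h3 _ hd1
      intro T T' hq X hd
      rcases hq with hq | hq
      · exact step_pres (fun _ _ h => Or.inr (Or.inl h)) hq hd
      · exact step_pres (fun _ _ h => Or.inr (Or.inr (Or.inl h))) hq hd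
    have hd3 : Dec lt (ET (f n)) (f (n + 1)) :=
      rtg_pres (fun T T' hq X hd =>
        step_pres (fun _ _ h => Or.inr (Or.inr (Or.inr h))) hq hd) h4.1 _ hd2
    exact hd3.mlt lt
  obtain ⟨z, hz, hmin⟩ := (mlt_wf lt hwf).has_min (Set.range fun n => ET (f n))
    ⟨ET (f 0), 0, rfl⟩
  obtain ⟨n, rfl⟩ := hz
  exact hmin (ET (f (n + 1))) ⟨n + 1, rfl⟩ (key n)

end StarGames
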